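/- arXiv:math/0509343 — 2 statements merged into one kernel-verified Lean document; each statement's English description precedes it below -/
import Mathlib

section
/- With the notation of the previous statement, for every path μ, r_μ(d_μ^{-1}(1)) equals exactly the set of p(μ)-th roots of unity { e^{2πij/p(μ)} : j = 0, 1, …, p(μ)−1 }. -/
/-!
Peeling off the first edge `e` of `μ = e :: ν`, a point of `r_μ(d_μ⁻¹(1))` is `a ^ m(e)` for some
`a` with `a ^ n(e) ∈ r_ν(d_ν⁻¹(1))`. By induction the latter set is the group of `p(ν)`-th roots of
unity, so `a` ranges over the `n(e) p(ν)`-th roots of unity, and in the divisible group `𝕋` the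
`m(e)`-th powers of the `N`-th roots of unity are exactly the `N / gcd(N, m(e))`-th roots of unity.
-/

open Real

/-- The contraction number `p(μ)` of a path, defined recursively. -/
def contractionNum {E : Type*} (n : E → ℕ) (m : E → ℤ) : List E → ℕ
  | [] => 1
  | e :: ν =>
    if m e = 0 then 1
    else (n e * contractionNum n m ν) / Nat.gcd (n e * contractionNum n m ν) (m e).natAbs

theorem exists_pow_eq_one_and_zpow_eq_iff {G : Type*} [CommGroup G] [RootableBy G ℕ] {N : ℕ}
    (hN : 0 < N) (m : ℤ) (w : G) :
    (∃ a : G, a ^ N = 1 ∧ a ^ m = w) ↔ w ^ (N / N.gcd m.natAbs) = 1 := by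
  set g := N.gcd m.natAbs
  have hg : 0 < g := Nat.gcd_pos_of_pos_left _ hN
  obtain ⟨q, m', hcop, hNq, hmm'⟩ := Int.exists_gcd_one (m := N) (n := m) hg
  change (N : ℤ) = q * g at hNq
  change m = m' * g at hmm'
  have hq : ((N / g : ℕ) : ℤ) = q := by
    rw [Int.natCast_div, hNq, Int.mul_ediv_cancel _ (by exact_mod_cast hg.ne')]
  rw [← zpow_natCast w, hq]
  -- `a` is a `g`-th root of `w ^ v`, where `u q + v m' = 1`.
  constructor
  · rintro ⟨a, ha, rfl⟩
    rw [← zpow_mul, show m * q = N * m' by rw [hNq, hmm']; ring, zpow_mul, zpow_natCast, ha,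
      one_zpow]
  · intro hw
    obtain ⟨u, v, huv⟩ := Int.isCoprime_iff_gcd_eq_one.mpr hcop
    obtain ⟨a, ha⟩ := RootableBy.surjective_pow G ℕ hg.ne' (w ^ v)
    replace ha : a ^ (g : ℤ) = w ^ v := by rw [zpow_natCast]; exact ha
    refine ⟨a, ?_, ?_⟩
    · rw [← zpow_natCast, hNq, mul_comm, zpow_mul, ha, ← zpow_mul, mul_comm, zpow_mul, hw,
        one_zpow]
    · calc a ^ m = (w ^ q) ^ (-u) * w ^ (u * q + v * m') := by
            rw [hmm', mul_comm m', zpow_mul, ha, ← zpow_mul, ← zpow_mul, ← zpow_add]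
            ring_nf
        _ = w := by rw [hw, one_zpow, one_mul, huv, zpow_one]

noncomputable instance Circle.instRootableByNat : RootableBy Circle ℕ :=
  rootableByOfPowLeftSurj _ _ fun {n} hn x => by
    obtain ⟨t, rfl⟩ := Circle.exp_surjective x
    refine ⟨Circle.exp (t / n), ?_⟩
    dsimp only
    rw [← Circle.exp_natCast_mul, mul_div_cancel₀ _ (by exact_mod_cast hn)]

theorem Circle.pow_eq_one_iff_exists_exp {q : ℕ} [NeZero q] {w : Circle} :
    w ^ q = 1 ↔ ∃ j < q, w = Circle.exp (2 * π * j / q) := by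
  have := Complex.mem_rootsOfUnity q (Circle.toUnits w)
  rw [mem_rootsOfUnity', Circle.toUnits_apply, Units.val_mk0, ← Circle.coe_pow,
    ← Circle.coe_one, Circle.coe_inj] at this
  rw [this]
  refine exists_congr fun j => and_congr_right fun _ => ?_
  rw [eq_comm, Circle.ext_iff, Circle.coe_exp]
  push_cast
  ring_nf

section Path

variable {E : Type*} (n : E → ℕ) (m : E → ℤ)

theorem contractionNum_pos (hn : ∀ e, 0 < n e) : ∀ μ : List E, 0 < contractionNum n m μ
  | [] => Nat.one_pos
  | e :: ν => by
    have h : 0 < n e * contractionNum n m ν := mul_pos (hn e) (contractionNum_pos hn ν)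
    rw [contractionNum]
    split_ifs
    · exact Nat.one_pos
    · exact Nat.div_pos (Nat.gcd_le_left _ h) (Nat.gcd_pos_of_pos_left _ h)

/-- The case `m e = 0` of the definition is the instance `N / gcd(N, 0) = 1` of the general one. -/
theorem contractionNum_cons (hn : ∀ e, 0 < n e) (e : E) (ν : List E) :
    contractionNum n m (e :: ν) =
      n e * contractionNum n m ν / (n e * contractionNum n m ν).gcd (m e).natAbs := by
  rw [contractionNum]
  split_ifs with he
  · rw [he, Int.natAbs_zero, Nat.gcd_zero_right,
      Nat.div_self (mul_pos (hn e) (contractionNum_pos n m hn ν))]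
  · rfl

/-- `torusFiber n m μ hμ` is `d_μ⁻¹(1) ⊆ 𝕋_μ` and `rangeImage n m μ hμ` is `r_μ(d_μ⁻¹(1))`. -/
def torusFiber (μ : List E) (hμ : μ ≠ []) : Set (Fin μ.length → Circle) :=
  {z | (∀ (i : ℕ) (h : i + 1 < μ.length),
      z ⟨i, Nat.lt_of_succ_lt h⟩ ^ n (μ.get ⟨i, Nat.lt_of_succ_lt h⟩) =
        z ⟨i + 1, h⟩ ^ m (μ.get ⟨i + 1, h⟩)) ∧
    z ⟨μ.length - 1, Nat.sub_lt (List.length_pos_iff.mpr hμ) Nat.one_pos⟩ ^ n (μ.getLast hμ) =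
      1}

def rangeImage (μ : List E) (hμ : μ ≠ []) : Set Circle :=
  (fun z => z ⟨0, List.length_pos_iff.mpr hμ⟩ ^ m (μ.head hμ)) '' torusFiber n m μ hμ

variable {n m}

theorem mem_torusFiber_cons_cons {e f : E} {ρ : List E} {z : Fin (ρ.length + 2) → Circle} :
    z ∈ torusFiber n m (e :: f :: ρ) (List.cons_ne_nil _ _) ↔
      z 0 ^ n e = z 1 ^ m f ∧ Fin.tail z ∈ torusFiber n m (f :: ρ) (List.cons_ne_nil _ _) := by
  constructor
  · rintro ⟨hchain, hlast⟩
    exact ⟨hchain 0 (by simp), fun i h => hchain (i + 1) (by simpa using h), hlast⟩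
  · rintro ⟨hhead, hchain, hlast⟩
    refine ⟨fun i h => ?_, hlast⟩
    cases i with
    | zero => exact hhead
    | succ i => exact hchain i (by simpa using h)

theorem mem_rangeImage_singleton {e : E} {w : Circle} :
    w ∈ rangeImage n m [e] (List.cons_ne_nil _ _) ↔ ∃ a, a ^ n e = 1 ∧ a ^ m e = w := by
  constructor
  · rintro ⟨z, ⟨-, hlast⟩, rfl⟩
    exact ⟨z 0, hlast, rfl⟩
  · rintro ⟨a, ha, rfl⟩
    exact ⟨fun _ => a, ⟨fun i h => by simp at h, ha⟩, rfl⟩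

theorem mem_rangeImage_cons_cons {e f : E} {ρ : List E} {w : Circle} :
    w ∈ rangeImage n m (e :: f :: ρ) (List.cons_ne_nil _ _) ↔
      ∃ a, a ^ n e ∈ rangeImage n m (f :: ρ) (List.cons_ne_nil _ _) ∧ a ^ m e = w := by
  constructor
  · rintro ⟨z, hz, rfl⟩
    rw [mem_torusFiber_cons_cons] at hz
    exact ⟨z 0, ⟨Fin.tail z, hz.2, hz.1.symm⟩, rfl⟩
  · rintro ⟨a, ⟨z, hz, hz₀⟩, rfl⟩
    let z' : Fin (ρ.length + 2) → Circle := Fin.cons a z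
    have hz'₀ : z' 0 = a := Fin.cons_zero (α := fun _ => Circle) a z
    refine ⟨z', mem_torusFiber_cons_cons.2 ?_, congrArg (· ^ m e) hz'₀⟩
    rw [hz'₀, Fin.tail_cons]
    exact ⟨hz₀.symm, hz⟩

theorem rangeImage_eq_setOf_pow_eq_one (hn : ∀ e, 0 < n e) :
    ∀ (μ : List E) (hμ : μ ≠ []), rangeImage n m μ hμ = {w | w ^ contractionNum n m μ = 1}
  | [e], _ => by
    ext w
    rw [mem_rangeImage_singleton, exists_pow_eq_one_and_zpow_eq_iff (hn e), Set.mem_ofPred_eq,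
      contractionNum_cons n m hn, contractionNum, mul_one]
  | e :: f :: ρ, _ => by
    ext w
    simp_rw [mem_rangeImage_cons_cons, rangeImage_eq_setOf_pow_eq_one hn (f :: ρ),
      Set.mem_ofPred_eq, ← pow_mul,
      exists_pow_eq_one_and_zpow_eq_iff (mul_pos (hn e) (contractionNum_pos n m hn _)),
      contractionNum_cons n m hn e]

end Path

/-- For a path `μ = (e₁, …, e_k)` in a directed graph with weights `n : E¹ → ℤ₊`,
`m : E¹ → ℤ`, with `𝕋_μ = { z ∈ 𝕋^k : z_i^{n(e_i)} = z_{i+1}^{m(e_{i+1})} }`,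
`d_μ(z) = z_k^{n(e_k)}` and `r_μ(z) = z_1^{m(e_1)}`, the set `r_μ(d_μ⁻¹(1))` is
exactly the set of `p(μ)`-th roots of unity `{ e^{2πij/p(μ)} : j = 0, …, p(μ)−1 }`. -/
theorem stmt7 {E : Type*} (n : E → ℕ) (m : E → ℤ)
    (hn : ∀ e, 0 < n e)
    (μ : List E) (hμ : μ ≠ []) :
    (fun z : Fin μ.length → Circle =>
        z ⟨0, List.length_pos_iff.mpr hμ⟩ ^ m (μ.head hμ)) ''
      {z : Fin μ.length → Circle |
        (∀ (i : ℕ) (h : i + 1 < μ.length),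
          z ⟨i, by omega⟩ ^ n (μ.get ⟨i, by omega⟩) =
            z ⟨i + 1, h⟩ ^ m (μ.get ⟨i + 1, h⟩)) ∧
        z ⟨μ.length - 1, by have := List.length_pos_iff.mpr hμ; omega⟩ ^ n (μ.getLast hμ) =
          1} =
    {w : Circle | ∃ j : ℕ, j < contractionNum n m μ ∧
      w = Circle.exp (2 * π * j / contractionNum n m μ)} := by
  have : NeZero (contractionNum n m μ) := ⟨(contractionNum_pos n m hn μ).ne'⟩
  change rangeImage n m μ hμ = _
  ext w
  rw [rangeImage_eq_setOf_pow_eq_one hn, Set.mem_ofPred_eq, Circle.pow_eq_one_iff_exists_exp]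
  rfl
end

section
/- Let n ≥ 1, m ∈ ℤ with m ∉ nℤ, set p = n/gcd(n,|m|) ≥ 2. For every ε > 0 there exists k ≥ 1 such that, with d(z) = z^n and r(z) = z^m on 𝕋, the set d^k((r^k)^{-1}(V_ε)) equals all of 𝕋, where V_ε = { e^{2πiθ} : −ε < θ < ε }. Concretely, d^k((r^k)^{-1}(V_ε)) = ⋃_{j=0}^{|q|^k−1} { e^{2πi(θp^k + j)/q^k} : −ε < θ < ε }, q/p being the reduced form of m/n, and this union is all of 𝕋 whenever 2εp^k > 1. -/
/-!
Write points of the circle as `e^{2πit}`. Taking an `m`-th root and then an `n`-th power sends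
`t` to `(n/m)(t + l) = (p/q)(t + l)`, so by induction `d^k((r^k)⁻¹(V_ε))` consists of the points
`t = (θp^k + j)/q^k` with `|θ| < ε` and `j ∈ ℤ`; Bézout for `p` and `q^(k+1)` shows that every `j`
is reached. These are arcs of length `2εp^k/|q|^k` centred at the multiples of `1/|q|^k`, so they
cover the circle as soon as `2εp^k > 1`, which happens for large `k` because `p ≥ 2`.
-/

open Real

/-- One step of the backward-forward set map of the correspondence `d(z) = z^n`,
`r(z) = z^m` on the circle: `V ↦ d(r⁻¹(V)) = { z^n : z^m ∈ V }`; its `k`-fold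
iterate is `d^k((r^k)⁻¹(V))`. -/
def backStep (n : ℕ) (m : ℤ) : Set Circle → Set Circle := fun S =>
  (fun z : Circle => z ^ n) '' ((fun z : Circle => z ^ m) ⁻¹' S)

/-- The arc `V_ε = { e^{2πiθ} : −ε < θ < ε }` on the circle. -/
def arcSet (ε : ℝ) : Set Circle :=
  {w : Circle | ∃ θ : ℝ, -ε < θ ∧ θ < ε ∧ w = Circle.exp (2 * π * θ)}

namespace Circle

lemma exists_eq_exp_two_pi_mul (w : Circle) : ∃ t : ℝ, w = exp (2 * π * t) := by
  obtain ⟨x, rfl⟩ := exp_surjective w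
  exact ⟨x / (2 * π), by rw [mul_div_cancel₀ _ two_pi_pos.ne']⟩

lemma exp_two_pi_mul_eq_iff {s t : ℝ} :
    exp (2 * π * s) = exp (2 * π * t) ↔ ∃ l : ℤ, s = t + l := by
  rw [exp_eq_exp]
  refine exists_congr fun l => ⟨fun h => ?_, fun h => by rw [h]; ring⟩
  exact mul_left_cancel₀ two_pi_pos.ne' (by rw [h]; ring)

lemma exp_two_pi_mul_add_intCast (t : ℝ) (l : ℤ) :
    exp (2 * π * (t + l)) = exp (2 * π * t) :=
  exp_two_pi_mul_eq_iff.2 ⟨l, rfl⟩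

lemma exp_two_pi_mul_zpow (t : ℝ) (m : ℤ) :
    exp (2 * π * t) ^ m = exp (2 * π * (m * t)) := by
  rw [← exp_intCast_mul]; ring_nf

lemma exp_two_pi_mul_pow (t : ℝ) (n : ℕ) :
    exp (2 * π * t) ^ n = exp (2 * π * (n * t)) := by
  rw [← exp_natCast_mul]; ring_nf

end Circle

open Circle

/-- `j` ranges over all of `ℤ` (only `j mod q^k` matters), which makes the family
stable under `backStep` without reducing indices. -/
def arcFamily (p q : ℤ) (ε : ℝ) (k : ℕ) : Set Circle :=
  {w | ∃ j : ℤ, ∃ θ : ℝ, -ε < θ ∧ θ < ε ∧ w = Circle.exp (2 * π * ((θ * p ^ k + j) / q ^ k))}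

lemma arcFamily_zero (p q : ℤ) (ε : ℝ) : arcFamily p q ε 0 = arcSet ε := by
  ext w
  simp only [arcFamily, arcSet, pow_zero, mul_one, div_one, Set.mem_ofPred_eq]
  constructor
  · rintro ⟨j, θ, hθ₁, hθ₂, rfl⟩
    exact ⟨θ, hθ₁, hθ₂, exp_two_pi_mul_add_intCast θ j⟩
  · rintro ⟨θ, hθ₁, hθ₂, rfl⟩
    exact ⟨0, θ, hθ₁, hθ₂, by simp⟩

lemma arcFamily_eq_setOf_lt (p q : ℤ) (hq : q ≠ 0) (ε : ℝ) (k : ℕ) :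
    arcFamily p q ε k =
      {w | ∃ j : ℤ, 0 ≤ j ∧ j < |q| ^ k ∧ ∃ θ : ℝ, -ε < θ ∧ θ < ε ∧
        w = Circle.exp (2 * π * ((θ * p ^ k + j) / q ^ k))} := by
  ext w
  refine ⟨?_, fun ⟨j, _, _, hθ⟩ => ⟨j, hθ⟩⟩
  rintro ⟨j, θ, hθ₁, hθ₂, rfl⟩
  have hqk : q ^ k ≠ 0 := pow_ne_zero k hq
  refine ⟨j % q ^ k, Int.emod_nonneg j hqk, abs_pow q k ▸ Int.emod_lt_abs j hqk, θ, hθ₁, hθ₂, ?_⟩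
  refine exp_two_pi_mul_eq_iff.2 ⟨j / q ^ k, ?_⟩
  have hj : (j : ℝ) = (j % q ^ k : ℤ) + q ^ k * (j / q ^ k : ℤ) := by
    exact_mod_cast (Int.emod_add_mul_ediv j (q ^ k)).symm
  rw [hj]
  field_simp
  ring

section BackStep

variable {n : ℕ} {m p q : ℤ}

lemma backStep_arcFamily_subset (hm : m ≠ 0) (hq : q ≠ 0) (hred : q * n = m * p)
    (ε : ℝ) (k : ℕ) :
    backStep n m (arcFamily p q ε k) ⊆ arcFamily p q ε (k + 1) := by
  rintro _ ⟨z, ⟨j, θ, hθ₁, hθ₂, hz⟩, rfl⟩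
  obtain ⟨t, rfl⟩ := exists_eq_exp_two_pi_mul z
  dsimp only at hz ⊢
  obtain ⟨l, hl⟩ := exp_two_pi_mul_eq_iff.1 ((exp_two_pi_mul_zpow t m).symm.trans hz)
  refine ⟨p * (j + l * q ^ k), θ, hθ₁, hθ₂, ?_⟩
  rw [exp_two_pi_mul_pow]
  congr 2
  have hredR : (q : ℝ) * n = m * p := by exact_mod_cast hred
  have hmR : (m : ℝ) ≠ 0 := by exact_mod_cast hm
  have hqR : (q : ℝ) ≠ 0 := by exact_mod_cast hq
  field_simp at hl ⊢
  push_cast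
  linear_combination (q : ℝ) ^ k * t * hredR + (p : ℝ) * hl

lemma subset_backStep_arcFamily (hm : m ≠ 0) (hq : q ≠ 0) (hpq : IsCoprime p q)
    (hred : q * n = m * p) (ε : ℝ) (k : ℕ) :
    arcFamily p q ε (k + 1) ⊆ backStep n m (arcFamily p q ε k) := by
  rintro _ ⟨J, θ, hθ₁, hθ₂, rfl⟩
  obtain ⟨u, v, huv⟩ := hpq.pow_right (n := k + 1)
  set s : ℝ := (θ * p ^ k + (u * J : ℤ)) / q ^ k
  have hmR : (m : ℝ) ≠ 0 := by exact_mod_cast hm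
  refine ⟨exp (2 * π * (s / m)), ⟨u * J, θ, hθ₁, hθ₂, ?_⟩, ?_⟩ <;> dsimp only
  · rw [exp_two_pi_mul_zpow, mul_div_cancel₀ _ hmR]
  · rw [exp_two_pi_mul_pow]
    refine exp_two_pi_mul_eq_iff.2 ⟨-(v * J), ?_⟩
    have hredR : (q : ℝ) * n = m * p := by exact_mod_cast hred
    have huvR : (u : ℝ) * p + v * q ^ (k + 1) = 1 := by exact_mod_cast huv
    have hqR : (q : ℝ) ≠ 0 := by exact_mod_cast hq
    simp only [s]
    field_simp
    push_cast
    linear_combination (q : ℝ) ^ k * (θ * p ^ k + u * J) * hredR + (q : ℝ) ^ k * m * J * huvR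

lemma backStep_arcFamily (hm : m ≠ 0) (hq : q ≠ 0) (hpq : IsCoprime p q)
    (hred : q * n = m * p) (ε : ℝ) (k : ℕ) :
    backStep n m (arcFamily p q ε k) = arcFamily p q ε (k + 1) :=
  (backStep_arcFamily_subset hm hq hred ε k).antisymm
    (subset_backStep_arcFamily hm hq hpq hred ε k)

lemma iterate_backStep_arcSet (hm : m ≠ 0) (hq : q ≠ 0) (hpq : IsCoprime p q)
    (hred : q * n = m * p) (ε : ℝ) (k : ℕ) :
    (backStep n m)^[k] (arcSet ε) = arcFamily p q ε k := by
  induction k with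
  | zero => exact (arcFamily_zero p q ε).symm
  | succ k ih => rw [Function.iterate_succ_apply', ih, backStep_arcFamily hm hq hpq hred]

end BackStep

/-- Every `t` is `(θp^k + j)/q^k` with `j` the integer nearest to `tq^k`. -/
lemma arcFamily_eq_univ (p q : ℤ) (hp : 0 < p) (hq : q ≠ 0) (ε : ℝ) (k : ℕ)
    (h : 1 < 2 * ε * (p : ℝ) ^ k) : arcFamily p q ε k = Set.univ := by
  refine Set.eq_univ_of_forall fun w => ?_
  obtain ⟨t, rfl⟩ := exists_eq_exp_two_pi_mul w
  have hpk : (0 : ℝ) < (p : ℝ) ^ k := pow_pos (by exact_mod_cast hp) k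
  have hqk : (q : ℝ) ^ k ≠ 0 := pow_ne_zero k (by exact_mod_cast hq)
  set y := t * q ^ k
  have hround := abs_sub_round y
  refine ⟨round y, (y - round y) / p ^ k, ?_, ?_, ?_⟩
  · rw [lt_div_iff₀ hpk]
    linarith [neg_abs_le (y - round y)]
  · rw [div_lt_iff₀ hpk]
    linarith [le_abs_self (y - round y)]
  · congr 2
    field_simp
    ring

lemma one_lt_of_mul_eq_of_not_dvd {n m p q : ℤ} (hp : 0 < p) (hm : ¬ n ∣ m)
    (hred : q * n = m * p) : 1 < p := by
  refine lt_of_le_of_ne hp fun h => hm ⟨q, ?_⟩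
  rw [← h, mul_one] at hred
  rw [← hred, mul_comm]

lemma exists_one_lt_two_mul_mul_pow {ε a : ℝ} (hε : 0 < ε) (ha : 1 < a) :
    ∃ k : ℕ, 1 ≤ k ∧ 1 < 2 * ε * a ^ k :=
  ((Filter.eventually_ge_atTop 1).and
    (((tendsto_pow_atTop_atTop_of_one_lt ha).const_mul_atTop (by positivity)).eventually_gt_atTop
      1)).exists

theorem stmt8_general (n : ℕ) (m : ℤ) (hm : ¬ (n : ℤ) ∣ m)
    (p q : ℤ) (hp : 0 < p) (hq : q ≠ 0) (hpq : IsCoprime p q) (hred : q * n = m * p)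
    (ε : ℝ) (hε : 0 < ε) :
    (∀ k : ℕ, 1 ≤ k →
      (backStep n m)^[k] (arcSet ε) =
        {w : Circle | ∃ j : ℤ, 0 ≤ j ∧ j < |q| ^ k ∧ ∃ θ : ℝ, -ε < θ ∧ θ < ε ∧
          w = Circle.exp (2 * π * ((θ * p ^ k + j) / q ^ k))}) ∧
    (∀ k : ℕ, 1 ≤ k → 1 < 2 * ε * (p : ℝ) ^ k →
      (backStep n m)^[k] (arcSet ε) = Set.univ) ∧
    (∃ k : ℕ, 1 ≤ k ∧ (backStep n m)^[k] (arcSet ε) = Set.univ) := by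
  have hm₀ : m ≠ 0 := by rintro rfl; exact hm (dvd_zero _)
  have iterate_eq k := iterate_backStep_arcSet hm₀ hq hpq hred ε k
  have cover k (hk : 1 < 2 * ε * (p : ℝ) ^ k) : (backStep n m)^[k] (arcSet ε) = Set.univ := by
    rw [iterate_eq, arcFamily_eq_univ p q hp hq ε k hk]
  have hp₁ : (1 : ℝ) < p := by exact_mod_cast one_lt_of_mul_eq_of_not_dvd hp hm hred
  obtain ⟨k, hk₁, hk⟩ := exists_one_lt_two_mul_mul_pow hε hp₁
  exact ⟨fun k _ => (iterate_eq k).trans (arcFamily_eq_setOf_lt p q hq ε k),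
    fun k _ => cover k, k, hk₁, cover k hk⟩

/-- For `n ≥ 1` and `m ∉ nℤ`, with `q/p` the reduced form of `m/n` (`p > 0`), and any
`ε > 0`: for every `k ≥ 1`,
`d^k((r^k)⁻¹(V_ε)) = ⋃_{j=0}^{|q|^k−1} { e^{2πi(θp^k + j)/q^k} : −ε < θ < ε }`;
moreover `d^k((r^k)⁻¹(V_ε)) = 𝕋` whenever `2εp^k > 1`; in particular there exists
`k ≥ 1` with `d^k((r^k)⁻¹(V_ε)) = 𝕋`. -/
theorem stmt8 (n : ℕ) (hn : 1 ≤ n) (m : ℤ) (hm : ¬ (n : ℤ) ∣ m)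
    (p q : ℤ) (hp : 0 < p) (hq : q ≠ 0) (hpq : IsCoprime p q) (hred : q * n = m * p)
    (ε : ℝ) (hε : 0 < ε) :
    (∀ k : ℕ, 1 ≤ k →
      (backStep n m)^[k] (arcSet ε) =
        {w : Circle | ∃ j : ℤ, 0 ≤ j ∧ j < |q| ^ k ∧ ∃ θ : ℝ, -ε < θ ∧ θ < ε ∧
          w = Circle.exp (2 * π * ((θ * p ^ k + j) / q ^ k))}) ∧
    (∀ k : ℕ, 1 ≤ k → 1 < 2 * ε * (p : ℝ) ^ k →
      (backStep n m)^[k] (arcSet ε) = Set.univ) ∧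
    (∃ k : ℕ, 1 ≤ k ∧ (backStep n m)^[k] (arcSet ε) = Set.univ) :=
  stmt8_general n m hm p q hp hq hpq hred ε hε
end
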